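/- Every square matrix A with entries in a field κ is conjugate over κ to its transpose: there exists D ∈ GL_n(κ) with Aᵀ = D A D⁻¹. -/

import Mathlib

set_option maxHeartbeats 1000000
open Polynomial Module
universe u
section XPair
variable {κ : Type u} [Field κ]

def XPair (N : Type u) [AddCommGroup N] [Module κ[X] N] [Module κ N]
    [IsScalarTower κ κ[X] N] : Prop :=
  ∃ B : N →ₗ[κ] N →ₗ[κ] κ,
    (∀ y : N, (∀ x, B x y = 0) → y = 0) ∧
    ∀ (x y : N), B ((X : κ[X]) • x) y = B x ((X : κ[X]) • y)

lemma XPair.of_equiv {M N : Type u}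
    [AddCommGroup M] [Module κ[X] M] [Module κ M] [IsScalarTower κ κ[X] M]
    [AddCommGroup N] [Module κ[X] N] [Module κ N] [IsScalarTower κ κ[X] N]
    (σ : M ≃ₗ[κ[X]] N) (h : XPair (κ := κ) N) : XPair (κ := κ) M := by
  obtain ⟨B, h1, h2⟩ := h
  let τ : M →ₗ[κ] N := (σ : M →ₗ[κ[X]] N).restrictScalars κ
  refine ⟨(B.comp τ).compl₂ τ, ?_, ?_⟩
  · intro y hy
    have key : ∀ x : N, B x (σ y) = 0 := by
      intro x
      have := hy (σ.symm x)
      simpa [τ] using this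
    have := h1 (σ y) key
    have : σ y = σ 0 := by simpa using this
    exact σ.injective this
  · intro x y
    have hx : τ ((X : κ[X]) • x) = (X : κ[X]) • τ x := by
      simp [τ, map_smul]
    have hy : τ ((X : κ[X]) • y) = (X : κ[X]) • τ y := by
      simp [τ, map_smul]
    simp only [LinearMap.compl₂_apply, LinearMap.comp_apply, hx, hy]
    exact h2 (τ x) (τ y)


lemma xpair_quot_monic (q : κ[X]) (hq : q.Monic) :
    XPair (κ := κ) (κ[X] ⧸ (κ[X] ∙ q)) := by
  by_cases hd0 : q.natDegree = 0
  · have hq1 : q = 1 := hq.natDegree_eq_zero.mp hd0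
    have htop : (κ[X] ∙ q) = ⊤ := by
      rw [hq1]; exact Ideal.span_singleton_one
    have hsub : Subsingleton (κ[X] ⧸ (κ[X] ∙ q)) :=
      Submodule.Quotient.subsingleton_iff.mpr htop
    exact ⟨0, fun y _ => Subsingleton.elim _ _, fun x y => by simp⟩
  · set d := q.natDegree with hdd
    have hd1 : 1 ≤ d := Nat.one_le_iff_ne_zero.mpr hd0
    set ψ : κ[X] →ₗ[κ] κ := (Polynomial.lcoeff κ (d-1)).comp (Polynomial.modByMonicHom q) with hψ
    have hψ_apply : ∀ p : κ[X], ψ p = (p %ₘ q).coeff (d-1) := fun p => rfl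
    have hker : (κ[X] ∙ q).restrictScalars κ ≤ LinearMap.ker ψ := by
      intro a ha
      rw [Submodule.restrictScalars_mem] at ha
      have hdvd : q ∣ a := Ideal.mem_span_singleton.mp ha
      have : a %ₘ q = 0 := (modByMonic_eq_zero_iff_dvd hq).mpr hdvd
      simp [LinearMap.mem_ker, hψ_apply, this]
    set φ : (κ[X] ⧸ (κ[X] ∙ q)) →ₗ[κ] κ :=
      (Submodule.liftQ ((κ[X] ∙ q).restrictScalars κ) ψ hker).comp
        ((Submodule.Quotient.restrictScalarsEquiv κ (κ[X] ∙ q)).symm : _ →ₗ[κ] _) with hφ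
    have hφ_mk : ∀ a : κ[X], φ (Submodule.Quotient.mk a) = (a %ₘ q).coeff (d-1) := by
      intro a
      rw [hφ]
      simp only [LinearMap.comp_apply, LinearEquiv.coe_coe,
        Submodule.Quotient.restrictScalarsEquiv_symm_mk, Submodule.liftQ_apply]
      exact hψ_apply a
    -- the bilinear form
    have hmul : ∀ a b : κ[X],
        (Submodule.Quotient.mk a : κ[X] ⧸ (κ[X] ∙ q)) * Submodule.Quotient.mk b
          = Submodule.Quotient.mk (a * b) := by
      intro a b
      rw [Ideal.Quotient.mk_eq_mk, Ideal.Quotient.mk_eq_mk, Ideal.Quotient.mk_eq_mk, ← map_mul]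
    have hsmulκ : ∀ (c : κ) (x y : κ[X] ⧸ (κ[X] ∙ q)), (c • x) * y = c • (x * y) := by
      intro c x y
      obtain ⟨a, rfl⟩ := Submodule.Quotient.mk_surjective _ x
      obtain ⟨b, rfl⟩ := Submodule.Quotient.mk_surjective _ y
      rw [← Submodule.Quotient.mk_smul, hmul, hmul, ← Submodule.Quotient.mk_smul, smul_mul_assoc]
    set B : (κ[X] ⧸ (κ[X] ∙ q)) →ₗ[κ] (κ[X] ⧸ (κ[X] ∙ q)) →ₗ[κ] κ :=
      LinearMap.mk₂ κ (fun x y => φ (x * y))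
        (fun x x' y => by show φ ((x + x') * y) = φ (x * y) + φ (x' * y); rw [add_mul, map_add])
        (fun c x y => by show φ ((c • x) * y) = c • φ (x * y); rw [hsmulκ, map_smul])
        (fun x y y' => by show φ (x * (y + y')) = φ (x * y) + φ (x * y'); rw [mul_add, map_add])
        (fun c x y => by
          show φ (x * (c • y)) = c • φ (x * y)
          rw [mul_comm, hsmulκ, mul_comm, map_smul]) with hB
    have hB_apply : ∀ x y, B x y = φ (x * y) := fun x y => rfl
    refine ⟨B, ?_, ?_⟩
    · -- right nondegeneracy
      intro y hy
      obtain ⟨b, rfl⟩ := Submodule.Quotient.mk_surjective _ y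
      set r := b %ₘ q with hr
      have hbr : (Submodule.Quotient.mk b : κ[X] ⧸ (κ[X] ∙ q)) = Submodule.Quotient.mk r := by
        rw [Submodule.Quotient.eq]
        refine Submodule.mem_span_singleton.mpr ⟨b /ₘ q, ?_⟩
        have := modByMonic_add_div b q
        rw [smul_eq_mul]
        linear_combination this
      by_cases hr0 : r = 0
      · rw [hbr, hr0]; exact Submodule.Quotient.mk_eq_zero _ |>.mpr (Submodule.zero_mem _)
      · exfalso
        set k := r.natDegree with hk
        have hkd : k < d := by
          refine natDegree_lt_natDegree hr0 ?_
          exact degree_modByMonic_lt b hq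
        have := hy (Submodule.Quotient.mk (X ^ (d - 1 - k)))
        rw [hbr, hB_apply, hmul, hφ_mk] at this
        set j := d - 1 - k with hj
        have hjk : j + k = d - 1 := by omega
        have hdeg : (X ^ j * r).degree < q.degree := by
          have h1 : (X ^ j * r).degree ≤ ((j + k : ℕ) : WithBot ℕ) := by
            refine (degree_mul_le _ _).trans ?_
            calc degree (X ^ j : κ[X]) + degree r
                ≤ ((j : ℕ) : WithBot ℕ) + ((k : ℕ) : WithBot ℕ) :=
                  add_le_add (degree_X_pow_le _) degree_le_natDegree
              _ = ((j + k : ℕ) : WithBot ℕ) := by norm_cast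
          refine h1.trans_lt ?_
          rw [degree_eq_natDegree hq.ne_zero]
          exact_mod_cast (show j + k < d by omega)
        rw [(modByMonic_eq_self_iff hq).mpr hdeg] at this
        rw [show d - 1 = j + k from hjk.symm] at this
        rw [add_comm j k, coeff_X_pow_mul] at this
        exact (leadingCoeff_ne_zero.mpr hr0) this
    · -- X-compatibility
      intro x y
      obtain ⟨a, rfl⟩ := Submodule.Quotient.mk_surjective _ x
      obtain ⟨b, rfl⟩ := Submodule.Quotient.mk_surjective _ y
      have hXa : ((X : κ[X]) • Submodule.Quotient.mk a : κ[X] ⧸ (κ[X] ∙ q))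
          = Submodule.Quotient.mk (X * a) := by
        rw [← smul_eq_mul, Submodule.Quotient.mk_smul]
      have hXb : ((X : κ[X]) • Submodule.Quotient.mk b : κ[X] ⧸ (κ[X] ∙ q))
          = Submodule.Quotient.mk (X * b) := by
        rw [← smul_eq_mul, Submodule.Quotient.mk_smul]
      rw [hXa, hXb, hB_apply, hB_apply, hmul, hmul]
      have : X * a * b = a * (X * b) := by ring
      rw [this]


lemma xpair_quot (q : κ[X]) (hq : q ≠ 0) : XPair (κ := κ) (κ[X] ⧸ (κ[X] ∙ q)) := by
  have hlc : q.leadingCoeff⁻¹ ≠ 0 := inv_ne_zero (leadingCoeff_ne_zero.mpr hq)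
  have hu : IsUnit (C q.leadingCoeff⁻¹ : κ[X]) := isUnit_C.mpr (isUnit_iff_ne_zero.mpr hlc)
  have hmonic : (q * C q.leadingCoeff⁻¹).Monic := monic_mul_leadingCoeff_inv hq
  have hspan : (κ[X] ∙ q) = (κ[X] ∙ (q * C q.leadingCoeff⁻¹)) := by
    rw [Submodule.span_singleton_eq_span_singleton]
    exact ⟨hu.unit, by rw [Units.smul_def, smul_eq_mul, IsUnit.unit_spec, mul_comm]⟩
  exact XPair.of_equiv (Submodule.quotEquivOfEq _ _ hspan) (xpair_quot_monic _ hmonic)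

lemma xpair_directSum {ι : Type u} [Fintype ι] [DecidableEq ι] (N : ι → Type u)
    [∀ i, AddCommGroup (N i)] [∀ i, Module κ[X] (N i)] [∀ i, Module κ (N i)]
    [∀ i, IsScalarTower κ κ[X] (N i)] (h : ∀ i, XPair (κ := κ) (N i)) :
    XPair (κ := κ) (DirectSum ι N) := by
  choose B hB1 hB2 using h
  set c : ∀ j : ι, DirectSum ι N →ₗ[κ] N j := fun j => DirectSum.component κ ι N j with hc
  refine ⟨∑ i, ((B i).comp (c i)).compl₂ (c i), ?_, ?_⟩
  · intro y hy
    refine DFinsupp.ext fun i => ?_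
    refine hB1 i (y i) fun z => ?_
    have := hy (DirectSum.lof κ ι N i z)
    rw [LinearMap.sum_apply, LinearMap.sum_apply] at this
    simp only [LinearMap.compl₂_apply, LinearMap.comp_apply] at this
    rw [Finset.sum_eq_single i] at this
    · simp [hc] at this; exact this
    · intro j _ hj
      have : c j (DirectSum.lof κ ι N i z) = 0 := by
        simp [hc, DirectSum.component.of, hj.symm]
      rw [this]; simp
    · intro hi; exact absurd (Finset.mem_univ i) hi
  · intro x y
    rw [LinearMap.sum_apply, LinearMap.sum_apply, LinearMap.sum_apply, LinearMap.sum_apply]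
    refine Finset.sum_congr rfl fun i _ => ?_
    simp only [LinearMap.compl₂_apply, LinearMap.comp_apply]
    have hx : c i ((X : κ[X]) • x) = (X : κ[X]) • c i x := by
      exact DFinsupp.smul_apply _ _ _
    have hy' : c i ((X : κ[X]) • y) = (X : κ[X]) • c i y := by
      exact DFinsupp.smul_apply _ _ _
    rw [hx, hy', hB2]


lemma xpair_aeval {V : Type u} [AddCommGroup V] [Module κ V] [FiniteDimensional κ V]
    (f : V →ₗ[κ] V) : XPair (κ := κ) (Module.AEval' f) := by
  have tor : Module.IsTorsion κ[X] (Module.AEval' f) := by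
    intro x
    refine ⟨⟨f.charpoly, mem_nonZeroDivisors_of_ne_zero f.charpoly_monic.ne_zero⟩, ?_⟩
    obtain ⟨m, rfl⟩ := (Module.AEval'.of f).surjective x
    show (f.charpoly : κ[X]) • (Module.AEval'.of f) m = 0
    rw [← Module.AEval.of_aeval_smul, LinearMap.aeval_self_charpoly]
    rw [show ((0 : Module.End κ V) • m) = 0 from rfl]
    simp
  obtain ⟨ι, hι, p, hp, e, ⟨σ⟩⟩ := Module.equiv_directSum_of_isTorsion tor
  classical
  exact XPair.of_equiv σ (xpair_directSum _ fun i => xpair_quot _ (pow_ne_zero _ (hp i).ne_zero))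

lemma exists_pairing {V : Type u} [AddCommGroup V] [Module κ V] [FiniteDimensional κ V]
    (f : V →ₗ[κ] V) :
    ∃ B : V →ₗ[κ] V →ₗ[κ] κ,
      (∀ y : V, (∀ x, B x y = 0) → y = 0) ∧ ∀ x y : V, B (f x) y = B x (f y) := by
  obtain ⟨B, h1, h2⟩ := xpair_aeval (κ := κ) f
  set τ : V →ₗ[κ] Module.AEval' f := ((Module.AEval'.of f).toLinearMap : V →ₗ[κ] Module.AEval' f) with hτ
  refine ⟨(B.comp τ).compl₂ τ, ?_, ?_⟩
  · intro y hy
    have key : ∀ x : Module.AEval' f, B x (Module.AEval'.of f y) = 0 := by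
      intro x
      have := hy ((Module.AEval'.of f).symm x)
      simpa [hτ] using this
    have := h1 _ key
    exact (Module.AEval'.of f).injective (by simpa using this)
  · intro x y
    simp only [LinearMap.compl₂_apply, LinearMap.comp_apply]
    have hx : τ (f x) = (X : κ[X]) • τ x := (Module.AEval'.X_smul_of f x).symm
    have hy : τ (f y) = (X : κ[X]) • τ y := (Module.AEval'.X_smul_of f y).symm
    rw [hx, hy, h2]

end XPair

/-- Every square matrix over a field is conjugate to its transpose. -/
theorem matrix_conj_transpose {κ : Type*} [Field κ] {n : ℕ} (hn : 0 < n)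
    (A : Matrix (Fin n) (Fin n) κ) :
    ∃ D : GL (Fin n) κ, A.transpose = (D : Matrix (Fin n) (Fin n) κ) * A *
      ((D⁻¹ : GL (Fin n) κ) : Matrix (Fin n) (Fin n) κ) := by
  classical
  set f : (Fin n → κ) →ₗ[κ] (Fin n → κ) := Matrix.mulVecLin A with hf
  obtain ⟨B, hB1, hB2⟩ := exists_pairing (κ := κ) f
  set D : Matrix (Fin n) (Fin n) κ :=
    Matrix.of fun i j => B (Pi.single i 1) (Pi.single j 1) with hD
  have expand : ∀ v : Fin n → κ,
      v = ∑ k, v k • (Pi.single k (1 : κ) : Fin n → κ) := by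
    intro v
    ext m
    rw [Finset.sum_apply]
    simp [Pi.single_apply]
  have hcol : ∀ i, f (Pi.single i 1) = ∑ k, A k i • (Pi.single k (1 : κ) : Fin n → κ) := by
    intro i
    ext k
    rw [Finset.sum_apply]
    simp [hf, Matrix.mulVec_single, Pi.single_apply]
  -- key identity
  have key : A.transpose * D = D * A := by
    ext i j
    have hL : (A.transpose * D) i j = B (f (Pi.single i 1)) (Pi.single j 1) := by
      rw [Matrix.mul_apply, hcol, map_sum, LinearMap.sum_apply]
      refine Finset.sum_congr rfl fun k _ => ?_
      simp [hD, Matrix.transpose_apply, smul_eq_mul]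
    have hR : (D * A) i j = B (Pi.single i 1) (f (Pi.single j 1)) := by
      rw [Matrix.mul_apply, hcol, map_sum]
      refine Finset.sum_congr rfl fun k _ => ?_
      simp [hD, smul_eq_mul, mul_comm]
    rw [hL, hR, hB2]
  -- D is invertible
  have hmul : ∀ x : Fin n → κ, ∀ i, D.mulVec x i = B (Pi.single i 1) x := by
    intro x i
    rw [Matrix.mulVec, dotProduct]
    conv_rhs => rw [expand x, map_sum]
    refine Finset.sum_congr rfl fun k _ => ?_
    simp [hD, smul_eq_mul, mul_comm]
  have hinj : Function.Injective (Matrix.toLin' D) := by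
    rw [← LinearMap.ker_eq_bot, LinearMap.ker_eq_bot']
    intro x hx
    refine hB1 x fun v => ?_
    rw [expand v, map_sum, LinearMap.sum_apply]
    refine Finset.sum_eq_zero fun i _ => ?_
    have hzero : B (Pi.single i 1) x = 0 := by
      rw [← hmul]
      show (Matrix.toLin' D) x i = 0
      rw [hx]
      rfl
    rw [map_smul, LinearMap.smul_apply, hzero, smul_zero]
  have hsurj : Function.Surjective (Matrix.toLin' D) :=
    LinearMap.injective_iff_surjective.mp hinj
  set e : (Fin n → κ) ≃ₗ[κ] (Fin n → κ) :=
    LinearEquiv.ofBijective (Matrix.toLin' D) ⟨hinj, hsurj⟩ with he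
  set E : Matrix (Fin n) (Fin n) κ := LinearMap.toMatrix' (e.symm : _ →ₗ[κ] _) with hE
  have hDE : D * E = 1 := by
    apply Matrix.toLin'.injective
    rw [Matrix.toLin'_mul, Matrix.toLin'_one, hE, Matrix.toLin'_toMatrix']
    refine LinearMap.ext fun v => ?_
    show Matrix.toLin' D (e.symm v) = v
    exact e.apply_symm_apply v
  have hED : E * D = 1 := by
    apply Matrix.toLin'.injective
    rw [Matrix.toLin'_mul, Matrix.toLin'_one, hE, Matrix.toLin'_toMatrix']
    refine LinearMap.ext fun v => ?_
    show e.symm (Matrix.toLin' D v) = v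
    exact e.symm_apply_apply v
  refine ⟨⟨D, E, hDE, hED⟩, ?_⟩
  show A.transpose = D * A * E
  calc A.transpose = A.transpose * (D * E) := by rw [hDE, mul_one]
    _ = (A.transpose * D) * E := by rw [mul_assoc]
    _ = (D * A) * E := by rw [key]
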